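/- Let a > b > 0 and set s = sqrt((b^4 + 2*a*b^3)/(a^4 + 2*a^3*b)), r = a*b/(a+b). Then the ellipse with semi-axes (s*a, b) and the ellipse with semi-axes (s*r, r) are confocal, i.e. the algebraic identity (s*r)^2 - r^2 = (s*a)^2 - b^2 holds. -/
import Mathlib


/-- For `a > b > 0`, with `s = √((b⁴+2ab³)/(a⁴+2a³b))` and `r = ab/(a+b)`,
the ellipse with semi-axes `(s*a, b)` and the ellipse with semi-axes `(s*r, r)`
are confocal: `(s*r)² - r² = (s*a)² - b²`. -/
theorem confocal_scaling (a b : ℝ) (hb : 0 < b) (hab : b < a)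
    (s r : ℝ)
    (hs : s = Real.sqrt ((b ^ 4 + 2 * a * b ^ 3) / (a ^ 4 + 2 * a ^ 3 * b)))
    (hr : r = a * b / (a + b)) :
    (s * r) ^ 2 - r ^ 2 = (s * a) ^ 2 - b ^ 2 := by
  have ha : 0 < a := hb.trans hab
  have hnum : 0 ≤ (b ^ 4 + 2 * a * b ^ 3) / (a ^ 4 + 2 * a ^ 3 * b) := by positivity
  have hs2 : s ^ 2 = (b ^ 4 + 2 * a * b ^ 3) / (a ^ 4 + 2 * a ^ 3 * b) := by
    rw [hs, Real.sq_sqrt hnum]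
  have hden : (a ^ 4 + 2 * a ^ 3 * b) ≠ 0 := by positivity
  have hab0 : a + b ≠ 0 := by positivity
  rw [hr, mul_pow, mul_pow, hs2]
  field_simp
  ring
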